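/- arXiv:1711.06965 — 3 statements merged into one kernel-verified Lean document; each statement's English description precedes it below -/
import Mathlib

section
/- The Borel measure μ_o on (0,1) with density u ↦ 1/(u+G−1) + 1/(G+1−u) with respect to Lebesgue measure is finite and T_o-invariant: μ_o(T_o⁻¹(A)) = μ_o(A) for every Borel set A ⊆ (0,1). -/
/-!
On `(1/(n+1), 1/n)` the map `T_o` is `x ↦ 1/x - n` for odd `n` and `x ↦ n + 1 - 1/x` for even
`n`, so its inverse branches are `y ↦ 1/(n + y)` and `y ↦ 1/(n + 1 - y)`. Under `x ↦ 1/x` the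
density `h` of `μ_o` becomes `t⁻² h(1/t) = 1/(t + G - 2) - 1/(t + G)`, thanks to `G² = G + 1`.
Hence `μ_o(T_o⁻¹ A)` is the integral over `A` of the sum of these differences at the points
`t = n + y` (odd `n`) and `t = n + 1 - y` (even `n`); each of the two families of points is an
arithmetic progression of step `2`, so its sum telescopes, to `1/(y + G - 1)` and to `1/(G + 1 - y)`
respectively, which is `h(y)` again.
-/

open Set MeasureTheory

/-- The golden ratio `G = (1+√5)/2`. -/
noncomputable def G : ℝ := (1 + Real.sqrt 5) / 2

/-- `a_o(x)`: the unique odd integer among `⌊1/x⌋`, `⌊1/x⌋ + 1`. -/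
noncomputable def aO (x : ℝ) : ℤ := if Odd ⌊1 / x⌋ then ⌊1 / x⌋ else ⌊1 / x⌋ + 1

/-- The odd-continued-fraction Gauss map `T_o(x) = |1/x − a_o(x)|`. -/
noncomputable def TO (x : ℝ) : ℝ := |1 / x - aO x|

/-- The measure `μ_o` on `(0,1)` with density `u ↦ 1/(u+G−1) + 1/(G+1−u)` with
respect to Lebesgue measure. -/
noncomputable def muO : Measure ℝ :=
  ((volume : Measure ℝ).restrict (Ioo (0 : ℝ) 1)).withDensity
    (fun u => ENNReal.ofReal (1 / (u + G - 1) + 1 / (G + 1 - u)))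

open Filter Topology Function
open scoped ENNReal

lemma one_lt_G : 1 < G := Real.one_lt_goldenRatio

lemma G_lt_two : G < 2 := Real.goldenRatio_lt_two

lemma G_sq : G ^ 2 = G + 1 := Real.goldenRatio_sq

noncomputable def muODensity (u : ℝ) : ℝ := 1 / (u + G - 1) + 1 / (G + 1 - u)

-- The density on `(1, ∞)` of the image of `μ_o` under `x ↦ 1/x`.
noncomputable def invDensity (t : ℝ) : ℝ := (t + G - 2)⁻¹ - (t + G)⁻¹

lemma inv_sq_mul_muODensity_inv {t : ℝ} (ht : 1 < t) :
    (t ^ 2)⁻¹ * muODensity t⁻¹ = invDensity t := by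
  have hG1 := one_lt_G
  have hG2 := G_lt_two
  have h1 : 1 + t * (G - 1) ≠ 0 := by nlinarith
  have h2 : t * (G + 1) - 1 ≠ 0 := by nlinarith
  have h3 : t + G - 2 ≠ 0 := by linarith
  have h4 : t + G ≠ 0 := by linarith
  have h5 : t ≠ 0 := by linarith
  unfold muODensity invDensity
  rw [show t⁻¹ + G - 1 = (1 + t * (G - 1)) / t by field_simp; ring,
    show G + 1 - t⁻¹ = (t * (G + 1) - 1) / t by field_simp]
  field_simp
  linear_combination (4 * t ^ 2 + 2 * t * G - 2 * t - 2 * t ^ 3) * G_sq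

lemma tsum_ofReal_sub_succ {u : ℕ → ℝ} (hu : Antitone u) (hlim : Tendsto u atTop (𝓝 0)) :
    ∑' j, ENNReal.ofReal (u j - u (j + 1)) = ENNReal.ofReal (u 0) := by
  have hnonneg : ∀ j, 0 ≤ u j - u (j + 1) := fun j => sub_nonneg.2 (hu j.le_succ)
  have hsum : HasSum (fun j => u j - u (j + 1)) (u 0) := by
    rw [hasSum_iff_tendsto_nat_of_nonneg hnonneg]
    simp_rw [Finset.sum_range_sub']
    simpa using tendsto_const_nhds.sub hlim
  rw [← ENNReal.ofReal_tsum_of_nonneg hnonneg hsum.summable, hsum.tsum_eq]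

lemma tsum_ofReal_invDensity_two_mul_add {β : ℝ} (hβ : 2 < β + G) :
    ∑' j : ℕ, ENNReal.ofReal (invDensity (2 * j + β)) = ENNReal.ofReal (β + G - 2)⁻¹ := by
  set u : ℕ → ℝ := fun j => (2 * j + (β + G - 2))⁻¹
  have hu : Antitone u := fun i j hij => by
    have : (i : ℝ) ≤ j := by exact_mod_cast hij
    exact inv_anti₀ (by positivity) (by linarith)
  have hlim : Tendsto u atTop (𝓝 0) :=
    (tendsto_atTop_add_const_right _ _
      ((tendsto_natCast_atTop_atTop (R := ℝ)).const_mul_atTop two_pos)).inv_tendsto_atTop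
  convert tsum_ofReal_sub_succ hu hlim using 3 with j
  · simp only [invDensity, u]; push_cast; ring_nf
  · simp

lemma muO_apply (S : Set ℝ) : muO S = ∫⁻ x in S ∩ Ioo 0 1, ENNReal.ofReal (muODensity x) := by
  rw [muO, withDensity_apply', Measure.restrict_restrict' measurableSet_Ioo]
  rfl

lemma isFiniteMeasure_muO : IsFiniteMeasure muO := by
  have hG := one_lt_G
  have hcont : ContinuousOn muODensity (Icc 0 1) := by
    intro u hu
    have := hu.1; have := hu.2
    unfold muODensity
    exact ((continuousAt_const.div (by fun_prop) (by linarith)).add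
      (continuousAt_const.div (by fun_prop) (by linarith))).continuousWithinAt
  exact isFiniteMeasure_withDensity_ofReal
    ((hcont.integrableOn_Icc).mono_set Ioo_subset_Icc_self).hasFiniteIntegral

def fold (m : ℤ) (y : ℝ) : ℝ := if Odd m then y else 1 - y

lemma fold_fold (m : ℤ) (y : ℝ) : fold m (fold m y) = y := by
  unfold fold; split_ifs <;> ring

lemma fold_mem_Ioo (m : ℤ) {y : ℝ} (hy : y ∈ Ioo (0 : ℝ) 1) : fold m y ∈ Ioo (0 : ℝ) 1 := by
  unfold fold; split_ifs
  · exact hy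
  · exact ⟨by linarith [hy.2], by linarith [hy.1]⟩

lemma continuous_fold (m : ℤ) : Continuous (fold m) := by
  unfold fold; split_ifs <;> fun_prop

lemma hasDerivAt_fold (m : ℤ) (y : ℝ) : HasDerivAt (fold m) (if Odd m then 1 else -1) y := by
  unfold fold; split_ifs
  · exact hasDerivAt_id y
  · simpa using (hasDerivAt_id y).const_sub 1

lemma TO_eq_fold (x : ℝ) : TO x = fold ⌊x⁻¹⌋ (x⁻¹ - ⌊x⁻¹⌋) := by
  have h0 : 0 ≤ x⁻¹ - ⌊x⁻¹⌋ := Int.fract_nonneg x⁻¹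
  have h1 : x⁻¹ - ⌊x⁻¹⌋ < 1 := Int.fract_lt_one x⁻¹
  unfold TO aO fold
  rw [one_div]
  split_ifs
  · exact abs_of_nonneg h0
  · rw [abs_of_neg (by push_cast; linarith)]; push_cast; ring

-- The inverse branch of `TO` onto `(1/(n+1), 1/n)`.
noncomputable def branch (n : ℕ) (y : ℝ) : ℝ := ((n : ℝ) + fold n y)⁻¹

lemma floor_inv_branch (n : ℕ) {y : ℝ} (hy : y ∈ Ioo (0 : ℝ) 1) : ⌊(branch n y)⁻¹⌋ = n := by
  have := fold_mem_Ioo n hy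
  rw [branch, inv_inv, Int.floor_eq_iff]
  constructor <;> push_cast <;> linarith [this.1, this.2]

lemma TO_branch (n : ℕ) {y : ℝ} (hy : y ∈ Ioo (0 : ℝ) 1) : TO (branch n y) = y := by
  rw [TO_eq_fold, floor_inv_branch n hy, branch, inv_inv]
  simpa using fold_fold n y

lemma branch_floor_inv_TO {x : ℝ} (hx : 0 ≤ x) : branch ⌊x⁻¹⌋₊ (TO x) = x := by
  rw [TO_eq_fold, ← Int.natCast_floor_eq_floor (inv_nonneg.2 hx), branch, fold_fold]
  simp

lemma branch_mem_Ioo {n : ℕ} (hn : 1 ≤ n) {y : ℝ} (hy : y ∈ Ioo (0 : ℝ) 1) :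
    branch n y ∈ Ioo (0 : ℝ) 1 := by
  have := fold_mem_Ioo n hy
  have hn' : (1 : ℝ) ≤ n := by exact_mod_cast hn
  exact ⟨inv_pos.2 (by linarith [this.1]), inv_lt_one_of_one_lt₀ (by linarith [this.1])⟩

lemma injOn_branch (n : ℕ) : InjOn (branch n) (Ioo 0 1) := fun y hy z hz h => by
  rw [← TO_branch n hy, h, TO_branch n hz]

lemma hasDerivAt_branch (n : ℕ) {y : ℝ} (hy : y ∈ Ioo (0 : ℝ) 1) :
    HasDerivAt (branch n) (-(if Odd (n : ℤ) then 1 else -1) / ((n : ℝ) + fold n y) ^ 2) y :=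
  ((hasDerivAt_fold n y).const_add (n : ℝ)).inv
    (by linarith [(fold_mem_Ioo n hy).1, n.cast_nonneg (α := ℝ)])

lemma measurableSet_image_branch (n : ℕ) {A : Set ℝ} (hAm : MeasurableSet A)
    (hA : A ⊆ Ioo 0 1) : MeasurableSet (branch n '' A) :=
  hAm.image_of_continuousOn_injOn
    (fun _ hy => (hasDerivAt_branch n (hA hy)).continuousAt.continuousWithinAt)
    ((injOn_branch n).mono hA)

lemma preimage_TO_inter_Ioo {A : Set ℝ} (hA : A ⊆ Ioo 0 1) :
    TO ⁻¹' A ∩ Ioo 0 1 = ⋃ k : ℕ, branch (k + 1) '' A := by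
  ext x
  simp only [mem_inter_iff, mem_preimage, mem_iUnion, mem_image]
  constructor
  · rintro ⟨hxA, hx⟩
    have hn : 1 ≤ ⌊x⁻¹⌋₊ := Nat.one_le_floor_iff _ |>.2 (one_le_inv₀ hx.1 |>.2 hx.2.le)
    refine ⟨⌊x⁻¹⌋₊ - 1, TO x, hxA, ?_⟩
    rw [Nat.sub_add_cancel hn, branch_floor_inv_TO hx.1.le]
  · rintro ⟨k, y, hy, rfl⟩
    exact ⟨by rwa [TO_branch _ (hA hy)], branch_mem_Ioo k.succ_pos (hA hy)⟩

lemma pairwise_disjoint_image_branch {A : Set ℝ} (hA : A ⊆ Ioo 0 1) :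
    Pairwise (Disjoint on fun n => branch n '' A) := by
  intro m n hmn
  refine disjoint_left.2 ?_
  rintro _ ⟨y, hy, rfl⟩ ⟨z, hz, hyz⟩
  have := floor_inv_branch n (hA hz)
  rw [hyz, floor_inv_branch m (hA hy)] at this
  exact hmn (by exact_mod_cast this)

lemma measurable_invDensity_add_fold (n : ℕ) :
    Measurable fun y => ENNReal.ofReal (invDensity (n + fold n y)) :=
  ((by unfold invDensity; fun_prop : Measurable invDensity).comp
    (measurable_const.add (continuous_fold n).measurable)).ennreal_ofReal

lemma setLIntegral_image_branch {n : ℕ} (hn : 1 ≤ n) {A : Set ℝ} (hAm : MeasurableSet A)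
    (hA : A ⊆ Ioo 0 1) :
    ∫⁻ x in branch n '' A, ENNReal.ofReal (muODensity x)
      = ∫⁻ y in A, ENNReal.ofReal (invDensity (n + fold n y)) := by
  rw [lintegral_image_eq_lintegral_abs_deriv_mul hAm
    (fun y hy => (hasDerivAt_branch n (hA hy)).hasDerivWithinAt) ((injOn_branch n).mono hA)]
  refine setLIntegral_congr_fun hAm fun y hy => ?_
  have ht : 1 < (n : ℝ) + fold n y := by
    have : (1 : ℝ) ≤ n := by exact_mod_cast hn
    linarith [(fold_mem_Ioo n (hA hy)).1]
  rw [← ENNReal.ofReal_mul (abs_nonneg _), ← inv_sq_mul_muODensity_inv ht, branch]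
  congr 2
  split_ifs <;> simp [abs_div]

lemma tsum_ofReal_invDensity_branch {y : ℝ} (hy : y ∈ Ioo (0 : ℝ) 1) :
    ∑' k : ℕ, ENNReal.ofReal (invDensity ((k + 1 : ℕ) + fold (k + 1 : ℕ) y))
      = ENNReal.ofReal (muODensity y) := by
  have hG := one_lt_G
  have hk_odd : ∀ j : ℕ, invDensity (((2 * j + 1 + 1 : ℕ) : ℝ) + fold (2 * j + 1 + 1 : ℕ) y)
      = invDensity (2 * j + (3 - y)) := fun j => by
    have : ¬ Odd ((2 * j + 1 + 1 : ℕ) : ℤ) := by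
      rw [Int.odd_coe_nat, Nat.odd_iff]; omega
    simp only [fold, this, if_false]; push_cast; ring_nf
  have hk_even : ∀ j : ℕ, invDensity (((2 * j + 1 : ℕ) : ℝ) + fold (2 * j + 1 : ℕ) y)
      = invDensity (2 * j + (1 + y)) := fun j => by
    have : Odd ((2 * j + 1 : ℕ) : ℤ) := by rw [Int.odd_coe_nat]; exact odd_two_mul_add_one j
    simp only [fold, this, if_true]; push_cast; ring_nf
  rw [← tsum_even_add_odd ENNReal.summable ENNReal.summable]
  simp only [hk_even, hk_odd]
  rw [tsum_ofReal_invDensity_two_mul_add (by linarith [hy.1]),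
    tsum_ofReal_invDensity_two_mul_add (by linarith [hy.2]),
    ← ENNReal.ofReal_add (inv_nonneg.2 (by linarith [hy.1])) (inv_nonneg.2 (by linarith [hy.2]))]
  congr 1
  simp only [muODensity, one_div]; ring_nf

/-- `μ_o` is a finite `T_o`-invariant measure on `(0,1)`. -/
theorem muO_finite_and_invariant :
    IsFiniteMeasure muO ∧
    ∀ A : Set ℝ, MeasurableSet A → A ⊆ Ioo (0 : ℝ) 1 →
      muO (TO ⁻¹' A) = muO A := by
  refine ⟨isFiniteMeasure_muO, fun A hAm hA => ?_⟩
  rw [muO_apply, preimage_TO_inter_Ioo hA,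
    lintegral_iUnion (fun k => measurableSet_image_branch _ hAm hA)
      ((pairwise_disjoint_image_branch hA).comp_of_injective Nat.succ_injective)]
  simp_rw [setLIntegral_image_branch (Nat.succ_pos _) hAm hA]
  rw [← lintegral_tsum fun k => (measurable_invDensity_add_fold _).aemeasurable,
    setLIntegral_congr_fun hAm fun y hy => tsum_ofReal_invDensity_branch (hA hy),
    muO_apply, inter_eq_self_of_subset_left hA]
end

section
/- An irrational number x ∈ (0,1) satisfies T_o^m(x) = T_o^n(x) for some integers 0 ≤ m < n (i.e. its odd continued fraction expansion is eventually periodic) if and only if x is a quadratic irrational. -/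
open Finset

noncomputable def epsO (x : ℝ) : ℤ := if Odd ⌊1 / x⌋ then 1 else -1

lemma epsO_eq_one_or_neg_one (y : ℝ) : epsO y = 1 ∨ epsO y = -1 := by
  unfold epsO; split_ifs <;> simp

lemma abs_epsO (y : ℝ) : |epsO y| = 1 := by
  rcases epsO_eq_one_or_neg_one y with h | h <;> rw [h] <;> norm_num

lemma epsO_mul_self (y : ℝ) : epsO y * epsO y = 1 := by
  rcases epsO_eq_one_or_neg_one y with h | h <;> rw [h] <;> norm_num

lemma one_div_eq_aO_add_epsO_mul_TO (y : ℝ) : 1 / y = aO y + epsO y * TO y := by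
  have hlo := Int.floor_le (1 / y)
  have hhi := Int.lt_floor_add_one (1 / y)
  unfold TO aO epsO
  split_ifs
  · rw [abs_of_nonneg (by linarith)]; push_cast; ring
  · push_cast; rw [abs_of_neg (by linarith)]; ring

lemma two_le_aO_add_epsO {y : ℝ} (h0 : 0 < y) (h1 : y < 1) : 2 ≤ aO y + epsO y := by
  have : 1 ≤ ⌊1 / y⌋ := Int.le_floor.mpr (by rw [Int.cast_one, le_div_iff₀ h0]; linarith)
  unfold aO epsO
  split_ifs with hodd
  · omega
  · obtain ⟨c, hc⟩ := Int.not_odd_iff_even.mp hodd; omega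

def ocfDomain : Set ℝ := {y | 0 < y ∧ y < 1 ∧ Irrational y}

lemma mapsTo_TO_ocfDomain : Set.MapsTo TO ocfDomain ocfDomain := by
  rintro y ⟨h0, -, hirr⟩
  have hinv : Irrational (1 / y) := by rw [one_div]; exact hirr.inv
  have hlo : (⌊1 / y⌋ : ℝ) < 1 / y := (Int.floor_le _).lt_of_ne (hinv.ne_int _).symm
  have hhi := Int.lt_floor_add_one (1 / y)
  refine ⟨abs_pos.mpr (sub_ne_zero.mpr (hinv.ne_int _)), ?_, ?_⟩
  · unfold TO aO
    split_ifs <;> push_cast <;> rw [abs_sub_lt_iff] <;> constructor <;> linarith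
  · rcases abs_choice (1 / y - aO y) with h | h <;> rw [TO, h]
    exacts [hinv.sub_intCast _, (hinv.sub_intCast _).neg]

lemma iterate_TO_mem_ocfDomain {x : ℝ} (hx : x ∈ ocfDomain) (k : ℕ) :
    TO^[k] x ∈ ocfDomain :=
  mapsTo_TO_ocfDomain.iterate k hx

/-- `row * ∏ i < k, !![0, 1; εᵢ, aᵢ]` with `aᵢ = aO (TO^[i] x)`, `εᵢ = epsO (TO^[i] x)`. -/
noncomputable def ocfRow (x : ℝ) (row : ℤ × ℤ) : ℕ → ℤ × ℤ
  | 0 => row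
  | k + 1 => (epsO (TO^[k] x) * (ocfRow x row k).2,
      (ocfRow x row k).1 + aO (TO^[k] x) * (ocfRow x row k).2)

/-- The rows of the matrix whose Möbius map sends `TO^[k] x` to `x`. -/
noncomputable abbrev ocfNum (x : ℝ) : ℕ → ℤ × ℤ := ocfRow x (1, 0)

noncomputable abbrev ocfDen (x : ℝ) : ℕ → ℤ × ℤ := ocfRow x (0, 1)

noncomputable def ocfRowEval (x : ℝ) (row : ℤ × ℤ) (k : ℕ) : ℝ :=
  (ocfRow x row k).1 * TO^[k] x + (ocfRow x row k).2

lemma ocfRowEval_succ (x : ℝ) (row : ℤ × ℤ) (k : ℕ) :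
    ocfRowEval x row (k + 1) = (ocfRow x row k).1 + (ocfRow x row k).2 / TO^[k] x := by
  rw [ocfRowEval, ocfRow, Function.iterate_succ_apply', div_eq_mul_one_div,
    one_div_eq_aO_add_epsO_mul_TO]
  push_cast; ring

lemma prod_mul_ocfRowEval {x : ℝ} (hx : x ∈ ocfDomain) (row : ℤ × ℤ) (k : ℕ) :
    (∏ i ∈ range k, TO^[i] x) * ocfRowEval x row k = row.1 * x + row.2 := by
  induction k with
  | zero => simp [ocfRowEval, ocfRow]
  | succ k ih =>
    have hk : TO^[k] x ≠ 0 := (iterate_TO_mem_ocfDomain hx k).1.ne'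
    rw [prod_range_succ, ocfRowEval_succ, ← ih, ocfRowEval]
    field_simp

lemma abs_det_ocfRow (x : ℝ) (row row' : ℤ × ℤ) (k : ℕ) :
    |(ocfRow x row k).1 * (ocfRow x row' k).2 - (ocfRow x row k).2 * (ocfRow x row' k).1| =
      |row.1 * row'.2 - row.2 * row'.1| := by
  induction k with
  | zero => rfl
  | succ k ih =>
    have hstep : (ocfRow x row (k + 1)).1 * (ocfRow x row' (k + 1)).2 -
          (ocfRow x row (k + 1)).2 * (ocfRow x row' (k + 1)).1 =
        -epsO (TO^[k] x) *
          ((ocfRow x row k).1 * (ocfRow x row' k).2 -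
            (ocfRow x row k).2 * (ocfRow x row' k).1) := by
      simp only [ocfRow]; ring
    rw [hstep, abs_mul, abs_neg, abs_epsO, one_mul, ih]

lemma sq_det_ocfRow (x : ℝ) (k : ℕ) :
    ((ocfNum x k).1 * (ocfDen x k).2 -
      (ocfNum x k).2 * (ocfDen x k).1) ^ 2 = 1 := by
  rw [← sq_abs, abs_det_ocfRow]; norm_num

lemma ocfDen_growth {x : ℝ} (hx : x ∈ ocfDomain) (k : ℕ) :
    1 ≤ (ocfDen x k).2 ∧ (ocfDen x k).2 ≤ 2 * (ocfDen x (k + 1)).2 ∧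
      (epsO (TO^[k] x) = -1 → 2 * (ocfDen x k).2 ≤ (ocfDen x (k + 1)).2) := by
  induction k with
  | zero =>
    obtain ⟨h0, h1, -⟩ := iterate_TO_mem_ocfDomain hx 0
    have ha := two_le_aO_add_epsO h0 h1
    simp only [ocfRow, Function.iterate_zero_apply] at ha ⊢
    rcases epsO_eq_one_or_neg_one x with h | h <;> rw [h] at ha ⊢ <;> omega
  | succ k ih =>
    obtain ⟨hs, hdouble, hneg⟩ := ih
    set s₀ := (ocfDen x k).2
    set s₁ := (ocfDen x (k + 1)).2
    set s₂ := (ocfDen x (k + 1 + 1)).2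
    set a := aO (TO^[k + 1] x)
    have hrec : s₂ = epsO (TO^[k] x) * s₀ + a * s₁ := rfl
    obtain ⟨h0, h1, -⟩ := iterate_TO_mem_ocfDomain hx (k + 1)
    have ha := two_le_aO_add_epsO h0 h1
    have ha1 : 1 ≤ a := by rcases epsO_eq_one_or_neg_one (TO^[k + 1] x) with h | h <;> omega
    have hs₁ : 1 ≤ s₁ := by omega
    have hkey : (2 * a - 1) * s₁ ≤ 2 * s₂ := by
      rcases epsO_eq_one_or_neg_one (TO^[k] x) with h | h
      · rw [hrec, h]; nlinarith
      · have := hneg h; rw [hrec, h]; nlinarith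
    refine ⟨hs₁, by nlinarith, fun h => ?_⟩
    have ha3 : 3 ≤ a := by rw [h] at ha; omega
    nlinarith

lemma den_le_two_mul_ocfRowEval {x : ℝ} (hx : x ∈ ocfDomain) (k : ℕ) :
    ((ocfDen x k).2 : ℝ) ≤ 2 * ocfRowEval x (0, 1) k := by
  cases k with
  | zero => norm_num [ocfRowEval, ocfRow]
  | succ k =>
    obtain ⟨hs, -, hneg⟩ := ocfDen_growth hx k
    obtain ⟨hy0, hy1, -⟩ := iterate_TO_mem_ocfDomain hx (k + 1)
    have hr : (ocfDen x (k + 1)).1 = epsO (TO^[k] x) * (ocfDen x k).2 := rfl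
    have hs₀ : (1 : ℝ) ≤ (ocfDen x k).2 := by exact_mod_cast hs
    have hs₁ : (0 : ℝ) ≤ (ocfDen x (k + 1)).2 := by
      have := (ocfDen_growth hx (k + 1)).1; positivity
    rw [ocfRowEval, hr]
    rcases epsO_eq_one_or_neg_one (TO^[k] x) with h | h
    · rw [h]; push_cast; nlinarith
    · have h2 : (2 * (ocfDen x k).2 : ℝ) ≤ (ocfDen x (k + 1)).2 := by
        exact_mod_cast hneg h
      rw [h]; push_cast; nlinarith

lemma one_le_ocfRowEval_den {x : ℝ} (hx : x ∈ ocfDomain) (k : ℕ) :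
    1 ≤ ocfRowEval x (0, 1) k := by
  have hprod := prod_mul_ocfRowEval hx (0, 1) k
  have hpos : 0 < ∏ i ∈ range k, TO^[i] x :=
    prod_pos fun i _ => (iterate_TO_mem_ocfDomain hx i).1
  have hle : ∏ i ∈ range k, TO^[i] x ≤ 1 :=
    prod_le_one (fun i _ => (iterate_TO_mem_ocfDomain hx i).1.le)
      fun i _ => (iterate_TO_mem_ocfDomain hx i).2.1.le
  push_cast at hprod
  nlinarith

lemma mul_ocfRowEval_den_eq_num {x : ℝ} (hx : x ∈ ocfDomain) (k : ℕ) :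
    x * ocfRowEval x (0, 1) k = ocfRowEval x (1, 0) k := by
  have hpos : 0 < ∏ i ∈ range k, TO^[i] x :=
    prod_pos fun i _ => (iterate_TO_mem_ocfDomain hx i).1
  have hnum := prod_mul_ocfRowEval hx (1, 0) k
  have hden := prod_mul_ocfRowEval hx (0, 1) k
  push_cast at hnum hden
  apply mul_left_cancel₀ hpos.ne'
  linear_combination x * hden - hnum

lemma abs_num_sub_mul_den_mul_ocfRowEval {x : ℝ} (hx : x ∈ ocfDomain) (k : ℕ) :
    |(ocfNum x k).2 - x * (ocfDen x k).2| * ocfRowEval x (0, 1) k = TO^[k] x := by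
  have hD := (one_le_ocfRowEval_den hx k).trans_lt' one_pos
  set d : ℤ := (ocfNum x k).1 * (ocfDen x k).2 - (ocfNum x k).2 * (ocfDen x k).1 with hd
  have hdet : |(d : ℝ)| = 1 := by
    rw [← Int.cast_abs, hd, abs_det_ocfRow]; norm_num
  have hmul : ((ocfNum x k).2 - x * (ocfDen x k).2) * ocfRowEval x (0, 1) k =
      -d * TO^[k] x := by
    have h := mul_ocfRowEval_den_eq_num hx k
    simp only [ocfRowEval] at h ⊢
    rw [hd]; push_cast
    linear_combination (-((ocfDen x k).2 : ℝ)) * h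
  rw [← abs_of_pos hD, ← abs_mul, hmul, abs_mul, abs_neg, hdet, one_mul,
    abs_of_pos (iterate_TO_mem_ocfDomain hx k).1]

lemma abs_num_sub_mul_den_le_one {x : ℝ} (hx : x ∈ ocfDomain) (k : ℕ) :
    |(ocfNum x k).2 - x * (ocfDen x k).2| ≤ 1 := by
  have h := abs_num_sub_mul_den_mul_ocfRowEval hx k
  have hD := one_le_ocfRowEval_den hx k
  have := (iterate_TO_mem_ocfDomain hx k).2.1
  nlinarith [abs_nonneg ((ocfNum x k).2 - x * (ocfDen x k).2)]

lemma abs_num_sub_mul_den_mul_den_le_two {x : ℝ} (hx : x ∈ ocfDomain) (k : ℕ) :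
    |(ocfNum x k).2 - x * (ocfDen x k).2| * |((ocfDen x k).2 : ℝ)| ≤ 2 := by
  have h := abs_num_sub_mul_den_mul_ocfRowEval hx k
  have hs := den_le_two_mul_ocfRowEval hx k
  have hs0 : (0 : ℝ) ≤ (ocfDen x k).2 := by
    have := (ocfDen_growth hx k).1; positivity
  have := (iterate_TO_mem_ocfDomain hx k).2.1
  rw [abs_of_nonneg hs0]
  nlinarith [abs_nonneg ((ocfNum x k).2 - x * (ocfDen x k).2)]

def qform (A B C u v : ℤ) : ℤ := A * u ^ 2 + B * u * v + C * v ^ 2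

/-- Middle coefficient of `qform A B C (p * t + q) (r * t + s)` as a polynomial in `t`. -/
def qpolar (A B C p q r s : ℤ) : ℤ := 2 * A * p * q + B * (p * s + q * r) + 2 * C * r * s

lemma qform_subst_eq_zero {A B C : ℤ} (p q r s : ℤ) {y t : ℝ}
    (hy : (A : ℝ) * y ^ 2 + B * y + C = 0) (h : y * (r * t + s) = p * t + q) :
    (qform A B C p r : ℝ) * t ^ 2 + qpolar A B C p q r s * t + qform A B C q s = 0 := by
  simp only [qform, qpolar]
  push_cast
  linear_combination (r * t + s : ℝ) ^ 2 * hy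
    - (A * (p * t + q + y * (r * t + s)) + B * (r * t + s) : ℝ) * h

lemma discrim_qform_subst (A B C p q r s : ℤ) :
    discrim (qform A B C p r) (qpolar A B C p q r s) (qform A B C q s) =
      discrim A B C * (p * s - q * r) ^ 2 := by
  simp only [discrim, qform, qpolar]; ring

lemma abs_quadratic_le {A B C x q s : ℝ} (hx : A * x ^ 2 + B * x + C = 0) (hx1 : |x| ≤ 1)
    (he : |q - x * s| ≤ 1) (hes : |q - x * s| * |s| ≤ 2) :
    |A * q ^ 2 + B * q * s + C * s ^ 2| ≤ 5 * |A| + 2 * |B| := by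
  have hsplit : A * q ^ 2 + B * q * s + C * s ^ 2 =
      A * (q - x * s) ^ 2 + (2 * A * x + B) * ((q - x * s) * s) := by
    linear_combination s ^ 2 * hx
  have hlin : |2 * A * x + B| ≤ 2 * |A| + |B| := by
    calc |2 * A * x + B| ≤ 2 * |A| * |x| + |B| := by
          grw [abs_add_le, abs_mul, abs_mul, abs_two]
      _ ≤ 2 * |A| + |B| := by nlinarith [abs_nonneg A]
  have hsq : |q - x * s| ^ 2 ≤ 1 := pow_le_one₀ (abs_nonneg _) he
  rw [hsplit]
  calc _ ≤ |A| * |q - x * s| ^ 2 + |2 * A * x + B| * (|q - x * s| * |s|) := by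
        grw [abs_add_le, abs_mul, abs_mul, abs_mul, abs_pow]
    _ ≤ |A| * 1 + (2 * |A| + |B|) * 2 := by gcongr
    _ = 5 * |A| + 2 * |B| := by ring

lemma Irrational.intCast_mul_add_intCast_ne_zero {x : ℝ} (hx : Irrational x) {b : ℤ}
    (hb : b ≠ 0) (c : ℤ) : (b : ℝ) * x + c ≠ 0 :=
  ((hx.intCast_mul hb).add_intCast c).ne_zero

lemma Irrational.discrim_ne_zero {x : ℝ} (hx : Irrational x) {a b c : ℤ} (ha : a ≠ 0)
    (h : (a : ℝ) * x ^ 2 + b * x + c = 0) : discrim a b c ≠ 0 := by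
  intro hd
  have hsq : discrim (a : ℝ) b c = (2 * a * x + b) ^ 2 :=
    discrim_eq_sq_of_quadratic_eq_zero (by linear_combination h)
  have h2a : (2 * a : ℤ) ≠ 0 := by omega
  refine hx.intCast_mul_add_intCast_ne_zero h2a b ((pow_eq_zero_iff two_ne_zero).mp ?_)
  push_cast
  rw [← hsq, discrim]
  exact_mod_cast hd

lemma Irrational.ne_zero_of_discrim_ne_zero {x : ℝ} (hx : Irrational x) {a b c : ℤ}
    (h : (a : ℝ) * x ^ 2 + b * x + c = 0) (hd : discrim a b c ≠ 0) : a ≠ 0 := by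
  rintro rfl
  have hb : b ≠ 0 := by rintro rfl; simp [discrim] at hd
  exact hx.intCast_mul_add_intCast_ne_zero hb c (by simpa using h)

lemma finite_setOf_bounded_quadratic_root (N : ℤ) :
    {y : ℝ | ∃ a b c : ℤ, |a| ≤ N ∧ |b| ≤ N ∧ |c| ≤ N ∧ a ≠ 0 ∧
      (a : ℝ) * y ^ 2 + b * y + c = 0}.Finite := by
  let box : Finset (ℤ × ℤ × ℤ) := Icc (-N) N ×ˢ Icc (-N) N ×ˢ Icc (-N) N
  let poly (t : ℤ × ℤ × ℤ) : Polynomial ℤ :=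
    Polynomial.C t.1 * Polynomial.X ^ 2 + Polynomial.C t.2.1 * Polynomial.X + Polynomial.C t.2.2
  refine ((box : Set (ℤ × ℤ × ℤ)).toFinite.biUnion
    fun t _ => (poly t).rootSet_finite ℝ).subset ?_
  rintro y ⟨a, b, c, ha, hb, hc, ha0, hy⟩
  refine Set.mem_biUnion (x := (a, b, c)) ?_ ?_
  · simp only [box, coe_product, Set.mem_prod, mem_coe, mem_Icc, ← abs_le]
    exact ⟨ha, hb, hc⟩
  · rw [Polynomial.mem_rootSet]
    refine ⟨fun h0 => ha0 ?_, by simpa [poly] using hy⟩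
    simpa [poly, Polynomial.coeff_X, Polynomial.coeff_C, -eq_intCast] using
      congrArg (Polynomial.coeff · 2) h0

lemma abs_qform_ocfRow_snd_le {x : ℝ} (hx : x ∈ ocfDomain) {A B C : ℤ}
    (hroot : (A : ℝ) * x ^ 2 + B * x + C = 0) (k : ℕ) :
    |qform A B C (ocfNum x k).2 (ocfDen x k).2| ≤ 5 * |A| + 2 * |B| := by
  have hx1 : |x| ≤ 1 := abs_le.mpr ⟨by linarith [hx.1], hx.2.1.le⟩
  have h := abs_quadratic_le hroot hx1 (abs_num_sub_mul_den_le_one hx k)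
    (abs_num_sub_mul_den_mul_den_le_two hx k)
  have : ((|qform A B C (ocfNum x k).2 (ocfDen x k).2| : ℤ) : ℝ) ≤
      ((5 * |A| + 2 * |B| : ℤ) : ℝ) := by
    push_cast [qform]; exact h
  exact_mod_cast this

lemma qform_ocfRow_fst_succ (x : ℝ) (A B C : ℤ) (k : ℕ) :
    qform A B C (ocfNum x (k + 1)).1 (ocfDen x (k + 1)).1 =
      qform A B C (ocfNum x k).2 (ocfDen x k).2 := by
  simp only [ocfRow, qform]
  linear_combination (A * (ocfNum x k).2 ^ 2 +
    B * (ocfNum x k).2 * (ocfDen x k).2 + C * (ocfDen x k).2 ^ 2) *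
    epsO_mul_self (TO^[k] x)

lemma abs_qform_ocfRow_fst_le {x : ℝ} (hx : x ∈ ocfDomain) {A B C : ℤ}
    (hroot : (A : ℝ) * x ^ 2 + B * x + C = 0) (k : ℕ) :
    |qform A B C (ocfNum x k).1 (ocfDen x k).1| ≤ 5 * |A| + 2 * |B| := by
  cases k with
  | zero =>
    simp only [ocfRow, qform]
    norm_num
    linarith [abs_nonneg A, abs_nonneg B]
  | succ k =>
    rw [qform_ocfRow_fst_succ]; exact abs_qform_ocfRow_snd_le hx hroot k

lemma exists_bound_quadratic_root_iterate_TO {x : ℝ} (hx : x ∈ ocfDomain) {A B C : ℤ}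
    (hA : A ≠ 0) (hroot : (A : ℝ) * x ^ 2 + B * x + C = 0) :
    ∃ N : ℤ, ∀ k, ∃ a b c : ℤ, |a| ≤ N ∧ |b| ≤ N ∧ |c| ≤ N ∧ a ≠ 0 ∧
      (a : ℝ) * (TO^[k] x) ^ 2 + b * TO^[k] x + c = 0 := by
  refine ⟨5 * |A| + 2 * |B| + |discrim A B C| + 4 * (5 * |A| + 2 * |B|) ^ 2, fun k => ?_⟩
  have ha := abs_qform_ocfRow_fst_le hx hroot k
  have hc := abs_qform_ocfRow_snd_le hx hroot k
  set M := 5 * |A| + 2 * |B|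
  have hM : 0 ≤ M := by positivity
  set p := (ocfNum x k).1
  set q := (ocfNum x k).2
  set r := (ocfDen x k).1
  set s := (ocfDen x k).2
  have hroot' : (qform A B C p r : ℝ) * (TO^[k] x) ^ 2 + qpolar A B C p q r s * TO^[k] x +
      qform A B C q s = 0 :=
    qform_subst_eq_zero p q r s hroot (by simpa [ocfRowEval] using mul_ocfRowEval_den_eq_num hx k)
  have hdisc : discrim (qform A B C p r) (qpolar A B C p q r s) (qform A B C q s) =
      discrim A B C := by
    rw [discrim_qform_subst, sq_det_ocfRow, mul_one]
  have hb : |qpolar A B C p q r s| ≤ |discrim A B C| + 4 * M ^ 2 := by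
    have hsq : qpolar A B C p q r s ^ 2 =
        discrim A B C + 4 * qform A B C p r * qform A B C q s := by
      rw [← hdisc, discrim]; ring
    have hac : |qform A B C p r * qform A B C q s| ≤ M ^ 2 := by
      rw [abs_mul, sq]; exact mul_le_mul ha hc (abs_nonneg _) hM
    have := Int.natAbs_le_self_sq (qpolar A B C p q r s)
    rw [Int.natCast_natAbs] at this
    linarith [le_abs_self (discrim A B C), le_abs_self (qform A B C p r * qform A B C q s)]
  have hpos : 0 ≤ |discrim A B C| + 4 * M ^ 2 := by positivity
  refine ⟨_, _, _, by linarith, by linarith, by linarith,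
    (iterate_TO_mem_ocfDomain hx k).2.2.ne_zero_of_discrim_ne_zero hroot' ?_, hroot'⟩
  rw [hdisc]; exact hx.2.2.discrim_ne_zero hA hroot

lemma exists_iterate_eq_of_quadratic {x : ℝ} (hx : x ∈ ocfDomain) {A B C : ℤ} (hA : A ≠ 0)
    (hroot : (A : ℝ) * x ^ 2 + B * x + C = 0) : ∃ m n : ℕ, m < n ∧ TO^[m] x = TO^[n] x := by
  obtain ⟨N, hN⟩ := exists_bound_quadratic_root_iterate_TO hx hA hroot
  exact (finite_setOf_bounded_quadratic_root N).exists_lt_map_eq_of_forall_mem hN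

def IsQuadratic (x : ℝ) : Prop := ∃ A B C : ℤ, A ≠ 0 ∧ (A : ℝ) * x ^ 2 + B * x + C = 0

lemma isQuadratic_of_iterate_succ_eq {y : ℝ} (hy : y ∈ ocfDomain) {k : ℕ}
    (hk : TO^[k + 1] y = y) : IsQuadratic y := by
  have h := mul_ocfRowEval_den_eq_num hy (k + 1)
  simp only [ocfRowEval, hk] at h
  have hr : (ocfDen y (k + 1)).1 = epsO (TO^[k] y) * (ocfDen y k).2 := rfl
  have heps : epsO (TO^[k] y) ≠ 0 := abs_ne_zero.mp (by rw [abs_epsO]; norm_num)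
  refine ⟨(ocfDen y (k + 1)).1, (ocfDen y (k + 1)).2 - (ocfNum y (k + 1)).1,
    -(ocfNum y (k + 1)).2, ?_, ?_⟩
  · rw [hr]; exact mul_ne_zero heps (by linarith [(ocfDen_growth hy k).1])
  · push_cast; linear_combination h

lemma IsQuadratic.of_iterate_TO {x : ℝ} (hx : x ∈ ocfDomain) {m : ℕ}
    (h : IsQuadratic (TO^[m] x)) : IsQuadratic x := by
  obtain ⟨a, b, c, ha, hroot⟩ := h
  set p := (ocfNum x m).1
  set q := (ocfNum x m).2
  set r := (ocfDen x m).1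
  set s := (ocfDen x m).2
  have hinv : TO^[m] x * ((-r : ℤ) * x + p) = s * x + (-q : ℤ) := by
    have := mul_ocfRowEval_den_eq_num hx m
    simp only [ocfRowEval] at this
    push_cast; linear_combination -this
  have hroot' := qform_subst_eq_zero s (-q) (-r) p hroot hinv
  have hdisc : discrim (qform a b c s (-r)) (qpolar a b c s (-q) (-r) p) (qform a b c (-q) p) =
      discrim a b c := by
    rw [discrim_qform_subst]; linear_combination discrim a b c * sq_det_ocfRow x m
  refine ⟨_, _, _, hx.2.2.ne_zero_of_discrim_ne_zero hroot' ?_, hroot'⟩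
  rw [hdisc]; exact (iterate_TO_mem_ocfDomain hx m).2.2.discrim_ne_zero ha hroot

lemma isQuadratic_of_iterate_eq {x : ℝ} (hx : x ∈ ocfDomain) {m n : ℕ} (hmn : m < n)
    (heq : TO^[m] x = TO^[n] x) : IsQuadratic x := by
  obtain ⟨k, rfl⟩ : ∃ k, n = k + 1 + m := ⟨n - m - 1, by omega⟩
  refine IsQuadratic.of_iterate_TO hx
    (isQuadratic_of_iterate_succ_eq (k := k) (iterate_TO_mem_ocfDomain hx m) ?_)
  rw [← Function.iterate_add_apply, heq]

/-- Proposition 8: an irrational `x ∈ (0,1)` has eventually periodic odd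
continued fraction expansion iff `x` is a quadratic irrational. -/
theorem eventually_periodic_OCF_iff_quadratic_surd (x : ℝ)
    (h0 : 0 < x) (h1 : x < 1) (hirr : Irrational x) :
    (∃ m n : ℕ, m < n ∧ TO^[m] x = TO^[n] x) ↔
    ∃ A B C : ℤ, A ≠ 0 ∧ (A : ℝ) * x ^ 2 + (B : ℝ) * x + (C : ℝ) = 0 := by
  have hx : x ∈ ocfDomain := ⟨h0, h1, hirr⟩
  constructor
  · rintro ⟨m, n, hmn, heq⟩
    exact isQuadratic_of_iterate_eq hx hmn heq
  · rintro ⟨A, B, C, hA, hroot⟩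
    exact exists_iterate_eq_of_quadratic hx hA hroot
end

section
/- Let α > 1 be irrational. Then there exists r ≥ 1 with T_e^r(1/α) = 1/α (i.e. α has purely periodic even continued fraction expansion) if and only if α is a quadratic irrational whose Galois conjugate ᾱ satisfies −1 < ᾱ < 1. Moreover, in that case T̄_e^r(1/α, −ᾱ) = (1/α, −ᾱ), so that −ᾱ has the purely periodic extended even continued fraction expansion given by the reversed period of α. -/
/-!
Write `αₙ = 1 / T_eⁿ (1 / α)`, so that `αₙ = aₙ + εₙ / αₙ₊₁`, and run the conjugate `ᾱ` through
the same Möbius maps `t ↦ εₙ / (t - aₙ)`. The pair `(αₙ, ᾱₙ)` stays the root pair of an integer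
quadratic of fixed discriminant.

If the expansion is periodic, a continuant computation makes `α` quadratic. The conjugate orbit is
then periodic with the same period, because an irrational root determines its quadratic up to
scaling; this is the statement about `T̄_e`. It cannot avoid `(-1, 1)` forever, since outside that
interval `|αₙ - ᾱₙ|` strictly increases, and once inside it stays inside; so `ᾱ ∈ (-1, 1)`.

Conversely, if `ᾱ ∈ (-1, 1)` then every `ᾱₙ` is, and at the infinitely many `n` with `αₙ ≥ 2` the
quadratics have bounded coefficients, so `(αᵢ, ᾱᵢ) = (αⱼ, ᾱⱼ)` for some `i < j`. As `ᾱₙ ∈ (-1, 1)`,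
the digits `(aₙ, εₙ)` are determined by `ᾱₙ₊₁`, and the coincidence propagates back to `n = 0`.
-/

/-- `a_e(x)`: the unique even integer among `⌊1/x⌋`, `⌊1/x⌋ + 1`. -/
noncomputable def aE (x : ℝ) : ℤ := if Even ⌊1 / x⌋ then ⌊1 / x⌋ else ⌊1 / x⌋ + 1

/-- `ε_e(x) = sign(1/x − a_e(x))`. -/
noncomputable def epsE (x : ℝ) : ℝ := if 0 < 1 / x - aE x then 1 else -1

/-- The even-continued-fraction Gauss map `T_e(x) = |1/x − a_e(x)|`. -/
noncomputable def TE (x : ℝ) : ℝ := |1 / x - aE x|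

/-- The natural extension `T̄_e(x,y) = (T_e x, ε_e(x)/(a_e(x)+y))`. -/
noncomputable def barTE (p : ℝ × ℝ) : ℝ × ℝ :=
  (TE p.1, epsE p.1 / ((aE p.1 : ℝ) + p.2))

open Set Function Filter

structure IntQuadratic where
  A : ℤ
  B : ℤ
  C : ℤ

namespace IntQuadratic

variable {q q' : IntQuadratic} {s t s' t' : ℝ}

def disc (q : IntQuadratic) : ℤ := q.B ^ 2 - 4 * q.A * q.C

/-- `s` and `t` are the roots of `A X² + B X + C`, in Vieta form (so `s = t` is a double root). -/
def HasRoots (q : IntQuadratic) (s t : ℝ) : Prop :=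
  q.A ≠ 0 ∧ (q.A : ℝ) * (s + t) + q.B = 0 ∧ (q.A : ℝ) * s * t = q.C

/-- Substituting `X = a + e / Y` into `A X² + B X + C` and clearing denominators (for `e = ±1`):
the roots `s` become `e / (s - a)`. -/
def substStep (q : IntQuadratic) (a e : ℤ) : IntQuadratic :=
  ⟨q.A * a ^ 2 + q.B * a + q.C, e * (2 * a * q.A + q.B), q.A⟩

lemma disc_substStep (q : IntQuadratic) {a e : ℤ} (he : e * e = 1) :
    (q.substStep a e).disc = q.disc := by
  unfold disc substStep
  linear_combination (2 * a * q.A + q.B) ^ 2 * he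

lemma hasRoots_of_eval_eq_zero {A B C : ℤ} (hA : A ≠ 0)
    (h : (A : ℝ) * s ^ 2 + B * s + C = 0) : (IntQuadratic.mk A B C).HasRoots s (-B / A - s) := by
  have hA' : (A : ℝ) ≠ 0 := Int.cast_ne_zero.mpr hA
  refine ⟨hA, by field_simp; ring, ?_⟩
  field_simp
  linear_combination -h

lemma HasRoots.eval_left (h : q.HasRoots s t) : (q.A : ℝ) * s ^ 2 + q.B * s + q.C = 0 := by
  linear_combination s * h.2.1 - h.2.2

lemma HasRoots.right_eq (h : q.HasRoots s t) : t = -q.B / q.A - s := by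
  have hA : (q.A : ℝ) ≠ 0 := Int.cast_ne_zero.mpr h.1
  field_simp
  linear_combination h.2.1

lemma HasRoots.sq_mul_sq_sub (h : q.HasRoots s t) : (q.A : ℝ) ^ 2 * (s - t) ^ 2 = q.disc := by
  unfold disc
  push_cast
  linear_combination ((q.A : ℝ) * (s + t) - q.B) * h.2.1 - 4 * q.A * h.2.2

lemma HasRoots.irrational_right (h : q.HasRoots s t) (hs : Irrational s) : Irrational t := by
  rw [h.right_eq]
  exact_mod_cast hs.ratCast_sub (-q.B / q.A : ℚ)

lemma HasRoots.ne (h : q.HasRoots s t) (hs : Irrational s) : s ≠ t := by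
  rintro rfl
  have hA : (q.A : ℝ) ≠ 0 := Int.cast_ne_zero.mpr h.1
  refine hs ⟨-q.B / (2 * q.A), ?_⟩
  push_cast
  field_simp
  linear_combination -h.2.1

/-- An irrational number is a root of essentially one integer quadratic. -/
lemma HasRoots.right_eq_of_hasRoots (h : q.HasRoots s t) (h' : q'.HasRoots s t')
    (hs : Irrational s) : t = t' := by
  have hlin :
      ((q.A * q'.B - q'.A * q.B : ℤ) : ℝ) * s + ((q.A * q'.C - q'.A * q.C : ℤ) : ℝ) = 0 := by
    push_cast
    linear_combination (q.A : ℝ) * h'.eval_left - q'.A * h.eval_left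
  have hB : q.A * q'.B - q'.A * q.B = 0 := by
    by_contra hne
    exact ((hs.intCast_mul hne).add_intCast _).ne_zero hlin
  have hA : (q.A : ℝ) ≠ 0 := Int.cast_ne_zero.mpr h.1
  have hA' : (q'.A : ℝ) ≠ 0 := Int.cast_ne_zero.mpr h'.1
  have hB' : (q.A : ℝ) * q'.B = q'.A * q.B := by exact_mod_cast sub_eq_zero.mp hB
  rw [h.right_eq, h'.right_eq]
  field_simp
  linear_combination hB'

lemma HasRoots.substStep (h : q.HasRoots s t) {a e : ℤ} (he : e * e = 1) (hs : s ≠ a)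
    (ht : t ≠ a) : (q.substStep a e).HasRoots (e / (s - a)) (e / (t - a)) := by
  have hs' : s - a ≠ 0 := sub_ne_zero.mpr hs
  have ht' : t - a ≠ 0 := sub_ne_zero.mpr ht
  have he' : (e : ℝ) * e = 1 := by exact_mod_cast he
  have hprod : (q.A : ℝ) * (s - a) * (t - a) = q.A * a ^ 2 + q.B * a + q.C := by
    linear_combination (-(a : ℝ)) * h.2.1 + h.2.2
  have hA : ((q.A * a ^ 2 + q.B * a + q.C : ℤ) : ℝ) ≠ 0 := by
    push_cast
    rw [← hprod]
    exact mul_ne_zero (mul_ne_zero (Int.cast_ne_zero.mpr h.1) hs') ht'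
  refine ⟨by exact_mod_cast hA, ?_, ?_⟩ <;> simp only [IntQuadratic.substStep] <;> push_cast <;>
    rw [← hprod] <;> field_simp
  · linear_combination (e : ℝ) * h.2.1
  · linear_combination (q.A : ℝ) * he'

lemma HasRoots.abs_le_disc (h : q.HasRoots s t) (hs : 2 ≤ s) (ht : t ∈ Ioo (-1) 1) :
    |q.A| ≤ q.disc ∧ |q.B| ≤ q.disc * (q.disc + 2) := by
  have hD := h.sq_mul_sq_sub
  have hA1 : (1 : ℝ) ≤ |(q.A : ℝ)| := by exact_mod_cast Int.one_le_abs h.1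
  have hAsq : |(q.A : ℝ)| ≤ (q.A : ℝ) ^ 2 := by nlinarith [sq_abs (q.A : ℝ)]
  have hst : 1 < s - t := by linarith [ht.2]
  have hsq : s - t ≤ (s - t) ^ 2 := by nlinarith
  have hAD : |(q.A : ℝ)| ≤ q.disc := by nlinarith
  have hstD : s - t ≤ q.disc := by nlinarith
  have hB : |(q.B : ℝ)| = |(q.A : ℝ)| * (s + t) := by
    rw [show (q.B : ℝ) = -(q.A * (s + t)) by linear_combination h.2.1, abs_neg, abs_mul,
      abs_of_pos (show 0 < s + t by linarith [ht.1])]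
  have hBD : |(q.B : ℝ)| ≤ q.disc * (q.disc + 2) := by
    rw [hB]
    exact mul_le_mul hAD (by linarith [ht.2]) (by linarith [ht.1]) (by linarith)
  exact ⟨by exact_mod_cast hAD, by exact_mod_cast hBD⟩

lemma HasRoots.eq_of_A_B_disc_eq (h : q.HasRoots s t) (h' : q'.HasRoots s' t') (hA : q.A = q'.A)
    (hB : q.B = q'.B) (hD : q.disc = q'.disc) (hts : t < s) (hts' : t' < s') :
    s = s' ∧ t = t' := by
  have hA0 : (q'.A : ℝ) ≠ 0 := Int.cast_ne_zero.mpr h'.1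
  have hroots := h.sq_mul_sq_sub
  have hsum := h.2.1
  rw [hA, hB] at hsum
  rw [hA, hD, ← h'.sq_mul_sq_sub] at hroots
  have hsq : (s - t) ^ 2 = (s' - t') ^ 2 := mul_left_cancel₀ (pow_ne_zero 2 hA0) hroots
  have hsum' : s + t = s' + t' := mul_left_cancel₀ hA0 (by linear_combination hsum - h'.2.1)
  have hdiff : s - t = s' - t' :=
    (pow_left_inj₀ (by linarith) (by linarith) two_ne_zero).mp hsq
  constructor <;> linarith

end IntQuadratic

lemma Irrational.one_div {x : ℝ} (hx : Irrational x) : Irrational (1 / x) :=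
  _root_.one_div x ▸ hx.inv

lemma aE_even (x : ℝ) : Even (aE x) := by
  unfold aE
  split_ifs with h
  · exact h
  · exact Int.even_add_one.mpr h

lemma aE_mem_Icc (x : ℝ) : aE x ∈ Icc ⌊1 / x⌋ (⌊1 / x⌋ + 1) := by
  unfold aE; split_ifs <;> constructor <;> omega

lemma two_le_aE {x : ℝ} (hx0 : 0 < x) (hx1 : x < 1) : 2 ≤ aE x := by
  have h1 : 1 ≤ ⌊1 / x⌋ := Int.le_floor.mpr (by push_cast; rw [le_div_iff₀ hx0]; linarith)
  obtain ⟨k, hk⟩ := aE_even x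
  have := (aE_mem_Icc x).1
  omega

lemma abs_one_div_sub_aE_lt_one {x : ℝ} (hx : Irrational x) : |1 / x - aE x| < 1 := by
  have hlt : (⌊1 / x⌋ : ℝ) < 1 / x :=
    (Int.floor_le _).lt_of_ne (hx.one_div.ne_int _).symm
  have hlt' : 1 / x < ⌊1 / x⌋ + 1 := Int.lt_floor_add_one _
  have ⟨hle, hle'⟩ := aE_mem_Icc x
  have : (⌊1 / x⌋ : ℝ) ≤ aE x := mod_cast hle
  have : (aE x : ℝ) ≤ ⌊1 / x⌋ + 1 := mod_cast hle'
  rw [abs_lt]; constructor <;> linarith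

lemma epsE_cases (x : ℝ) : epsE x = 1 ∨ epsE x = -1 := by
  unfold epsE; split_ifs <;> simp

lemma abs_epsE (x : ℝ) : |epsE x| = 1 := by
  rcases epsE_cases x with h | h <;> simp [h]

lemma epsE_ne_zero (x : ℝ) : epsE x ≠ 0 :=
  abs_pos.mp (abs_epsE x ▸ one_pos)

lemma epsE_mul_self (x : ℝ) : epsE x * epsE x = 1 := by
  rcases epsE_cases x with h | h <;> simp [h]

noncomputable def epsZ (x : ℝ) : ℤ := if 0 < 1 / x - aE x then 1 else -1

lemma epsZ_cast (x : ℝ) : (epsZ x : ℝ) = epsE x := by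
  unfold epsZ epsE; split_ifs <;> simp

lemma epsZ_mul_self (x : ℝ) : epsZ x * epsZ x = 1 := by
  unfold epsZ; split_ifs <;> rfl

/-- No hypothesis is needed: when `1 / x = a_e x` both sides are `0` by the `/ 0` convention. -/
lemma one_div_TE (x : ℝ) : 1 / TE x = epsE x / (1 / x - aE x) := by
  unfold TE epsE
  split_ifs with h
  · rw [abs_of_pos h]
  · rw [abs_of_nonpos (not_lt.mp h), div_neg, neg_div]

def ecfDomain : Set ℝ := Ioo 0 1 ∩ {x | Irrational x}

lemma one_div_sub_aE_ne_zero {x : ℝ} (hx : Irrational x) : 1 / x - aE x ≠ 0 :=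
  (hx.one_div.sub_intCast _).ne_zero

lemma mapsTo_TE : MapsTo TE ecfDomain ecfDomain := by
  rintro x ⟨-, hx⟩
  refine ⟨⟨abs_pos.mpr (one_div_sub_aE_ne_zero hx), abs_one_div_sub_aE_lt_one hx⟩, ?_⟩
  have hirr := hx.one_div.sub_intCast (aE x)
  rcases abs_choice (1 / x - aE x) with h | h
  · exact (congrArg Irrational h).mpr hirr
  · exact (congrArg Irrational h).mpr hirr.neg

lemma TE_iterate_mem {x : ℝ} (hx : x ∈ ecfDomain) (n : ℕ) : TE^[n] x ∈ ecfDomain :=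
  mapsTo_TE.iterate n hx

noncomputable def ecfStep (x t : ℝ) : ℝ := epsE x / (t - aE x)

/-- `ecfOrbit x (1 / x) n = 1 / T_e^n x`; for the conjugate `t` of `1 / x` this is the conjugate
orbit, `T̄_e^n (x, -t) = (T_e^n x, -ecfOrbit x t n)`. -/
noncomputable def ecfOrbit (x t : ℝ) : ℕ → ℝ
  | 0 => t
  | n + 1 => ecfStep (TE^[n] x) (ecfOrbit x t n)

lemma ecfOrbit_succ (x t : ℝ) (n : ℕ) :
    ecfOrbit x t (n + 1) = ecfStep (TE^[n] x) (ecfOrbit x t n) := rfl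

lemma ecfOrbit_add (x t : ℝ) (m n : ℕ) :
    ecfOrbit x t (m + n) = ecfOrbit (TE^[m] x) (ecfOrbit x t m) n := by
  induction n with
  | zero => rfl
  | succ n ih => rw [← add_assoc, ecfOrbit_succ, ih, ecfOrbit_succ, ← iterate_add_apply, add_comm]

lemma ecfOrbit_one_div (x : ℝ) (n : ℕ) : ecfOrbit x (1 / x) n = 1 / TE^[n] x := by
  induction n with
  | zero => rfl
  | succ n ih => rw [ecfOrbit_succ, ih, iterate_succ_apply', one_div_TE, ecfStep]

lemma irrational_ecfOrbit_one_div {x : ℝ} (hx : x ∈ ecfDomain) (n : ℕ) :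
    Irrational (ecfOrbit x (1 / x) n) :=
  ecfOrbit_one_div x n ▸ (TE_iterate_mem hx n).2.one_div

lemma barTE_iterate (x t : ℝ) (n : ℕ) : barTE^[n] (x, -t) = (TE^[n] x, -ecfOrbit x t n) := by
  induction n with
  | zero => rfl
  | succ n ih =>
    rw [iterate_succ_apply', ih, iterate_succ_apply', ecfOrbit_succ, ecfStep, barTE, ← div_neg,
      neg_sub, sub_eq_add_neg]

lemma ecfStep_injective (x : ℝ) : Injective (ecfStep x) := fun s t h => by
  simpa [ecfStep, div_eq_mul_inv, epsE_ne_zero] using h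

lemma ecfOrbit_injective (x : ℝ) (n : ℕ) : Injective (ecfOrbit x · n) := by
  induction n with
  | zero => exact injective_id
  | succ n ih => exact (ecfStep_injective _).comp ih

lemma ecfStep_mul_sub {x t : ℝ} (ht : t ≠ aE x) : ecfStep x t * (t - aE x) = epsE x :=
  div_mul_cancel₀ _ (sub_ne_zero.mpr ht)

open IntQuadratic

noncomputable def ecfCoeffs (x : ℝ) (q : IntQuadratic) : ℕ → IntQuadratic
  | 0 => q
  | n + 1 => (ecfCoeffs x q n).substStep (aE (TE^[n] x)) (epsZ (TE^[n] x))

lemma disc_ecfCoeffs (x : ℝ) (q : IntQuadratic) (n : ℕ) : (ecfCoeffs x q n).disc = q.disc := by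
  induction n with
  | zero => rfl
  | succ n ih => rw [ecfCoeffs, disc_substStep _ (epsZ_mul_self _), ih]

section Orbit

variable {x t : ℝ} {q : IntQuadratic}

lemma hasRoots_ecfCoeffs (hx : x ∈ ecfDomain) (h : q.HasRoots (1 / x) t) (n : ℕ) :
    (ecfCoeffs x q n).HasRoots (ecfOrbit x (1 / x) n) (ecfOrbit x t n) := by
  induction n with
  | zero => exact h
  | succ n ih =>
    have hirr := irrational_ecfOrbit_one_div hx n
    have hne : ∀ s : ℝ, Irrational s → s ≠ aE (TE^[n] x) := fun s hs => hs.ne_int _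
    have h' :=
      ih.substStep (epsZ_mul_self (TE^[n] x)) (hne _ hirr) (hne _ (ih.irrational_right hirr))
    rwa [epsZ_cast] at h'

lemma ecfOrbit_eq_self_of_periodic (hx : x ∈ ecfDomain) (h : q.HasRoots (1 / x) t) {r : ℕ}
    (hr : TE^[r] x = x) : ecfOrbit x t r = t := by
  have hr' := hasRoots_ecfCoeffs hx h r
  rw [ecfOrbit_one_div, hr] at hr'
  exact (h.right_eq_of_hasRoots hr' hx.2.one_div).symm

end Orbit

/-- The columns of the matrix product `∏ₖ [[aₖ, εₖ], [1, 0]]` over the first `n` digits of `x`,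
started from the column `c`. -/
noncomputable def ecfContinuant (x : ℝ) (c : ℤ × ℤ) : ℕ → ℤ × ℤ
  | 0 => c
  | n + 1 => (aE (TE^[n] x) * (ecfContinuant x c n).1 + (ecfContinuant x c n).2,
      epsZ (TE^[n] x) * (ecfContinuant x c n).1)

section Continuant

variable {x : ℝ}

lemma ecfContinuant_eval_succ (hx : x ∈ ecfDomain) (c : ℤ × ℤ) (n : ℕ) :
    ((ecfContinuant x c (n + 1)).1 : ℝ) * ecfOrbit x (1 / x) (n + 1)
        + (ecfContinuant x c (n + 1)).2 = ecfOrbit x (1 / x) (n + 1) *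
          ((ecfContinuant x c n).1 * ecfOrbit x (1 / x) n + (ecfContinuant x c n).2) := by
  have key := ecfStep_mul_sub ((irrational_ecfOrbit_one_div hx n).ne_int (aE (TE^[n] x)))
  rw [ecfOrbit_succ, ecfContinuant]
  push_cast
  rw [epsZ_cast]
  linear_combination -(ecfContinuant x c n).1 * key

lemma ecfContinuant_eval (hx : x ∈ ecfDomain) (n : ℕ) :
    1 / x * (((ecfContinuant x (0, 1) n).1 : ℝ) * ecfOrbit x (1 / x) n
        + (ecfContinuant x (0, 1) n).2)
      = (ecfContinuant x (1, 0) n).1 * ecfOrbit x (1 / x) n + (ecfContinuant x (1, 0) n).2 := by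
  induction n with
  | zero => simp [ecfContinuant, ecfOrbit]
  | succ n ih => rw [ecfContinuant_eval_succ hx, ecfContinuant_eval_succ hx, ← ih]; ring

lemma abs_snd_lt_fst_ecfContinuant (hx : x ∈ ecfDomain) (n : ℕ) :
    |(ecfContinuant x (0, 1) (n + 1)).2| < (ecfContinuant x (0, 1) (n + 1)).1 := by
  induction n with
  | zero => simp [ecfContinuant]
  | succ n ih =>
    have ha := two_le_aE (TE_iterate_mem hx (n + 1)).1.1 (TE_iterate_mem hx (n + 1)).1.2
    rw [ecfContinuant]
    set q := ecfContinuant x (0, 1) (n + 1)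
    have heps : |epsZ (TE^[n + 1] x) * q.1| = q.1 := by
      unfold epsZ; split_ifs <;> simp [abs_of_pos (abs_nonneg q.2 |>.trans_lt ih)]
    have hmul : 2 * q.1 ≤ aE (TE^[n + 1] x) * q.1 :=
      mul_le_mul_of_nonneg_right ha (by linarith [abs_nonneg q.2])
    rw [heps]
    linarith [neg_abs_le q.2]

lemma exists_quadratic_of_periodic (hx : x ∈ ecfDomain) {r : ℕ} (hr : 1 ≤ r)
    (hfix : TE^[r] x = x) :
    ∃ A B C : ℤ, A ≠ 0 ∧ (A : ℝ) * (1 / x) ^ 2 + B * (1 / x) + C = 0 := by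
  obtain ⟨n, rfl⟩ : ∃ n, r = n + 1 := ⟨r - 1, by omega⟩
  have hq := abs_snd_lt_fst_ecfContinuant hx n
  have h := ecfContinuant_eval hx (n + 1)
  rw [ecfOrbit_one_div, hfix] at h
  set q := ecfContinuant x (0, 1) (n + 1)
  set p := ecfContinuant x (1, 0) (n + 1)
  refine ⟨q.1, q.2 - p.1, -p.2, ?_, by push_cast; linear_combination h⟩
  have := abs_nonneg q.2
  omega

end Continuant

lemma ecfStep_mem_Ioo {x t : ℝ} (hx : x ∈ Ioo 0 1) (ht : t ∈ Ioo (-1) 1) :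
    ecfStep x t ∈ Ioo (-1) 1 := by
  have ha : (2 : ℝ) ≤ aE x := by exact_mod_cast two_le_aE hx.1 hx.2
  rw [mem_Ioo, ← abs_lt, ecfStep, abs_div, abs_epsE, abs_of_neg (by linarith [ht.2]),
    div_lt_one (by linarith [ht.2])]
  linarith [ht.2]

lemma ecfOrbit_mem_Ioo {x t : ℝ} (hx : x ∈ ecfDomain) (ht : t ∈ Ioo (-1) 1) (n : ℕ) :
    ecfOrbit x t n ∈ Ioo (-1) 1 := by
  induction n with
  | zero => exact ht
  | succ n ih => exact ecfStep_mem_Ioo (TE_iterate_mem hx n).1 ih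

/-- The Möbius step expands distances from `1 / y` by the factor `1 / (T_e y · |t - a_e y|)`. -/
lemma abs_sub_lt_abs_ecfStep_sub {y t : ℝ} (hy : y ∈ ecfDomain) (hne : t ≠ 1 / y)
    (ht : 1 ≤ |ecfStep y t|) : |1 / y - t| < |ecfStep y (1 / y) - ecfStep y t| := by
  have hu0 : 0 < |1 / y - aE y| := abs_pos.mpr (one_div_sub_aE_ne_zero hy.2)
  have hu1 : |1 / y - aE y| < 1 := abs_one_div_sub_aE_lt_one hy.2
  have hv : t - aE y ≠ 0 := fun h => by norm_num [ecfStep, h] at ht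
  have hv1 : |t - aE y| ≤ 1 := by
    rwa [ecfStep, abs_div, abs_epsE, one_le_div (abs_pos.mpr hv)] at ht
  have hid : |ecfStep y (1 / y) - ecfStep y t| * (|1 / y - aE y| * |t - aE y|) = |1 / y - t| := by
    have hu := one_div_sub_aE_ne_zero hy.2
    have h : (ecfStep y (1 / y) - ecfStep y t) * ((1 / y - aE y) * (t - aE y))
        = epsE y * (t - 1 / y) := by
      unfold ecfStep
      field_simp
      ring
    simpa only [abs_mul, abs_epsE, one_mul, abs_sub_comm t] using congrArg abs h
  have hpos : 0 < |ecfStep y (1 / y) - ecfStep y t| :=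
    abs_pos.mpr (sub_ne_zero.mpr ((ecfStep_injective y).ne (Ne.symm hne)))
  calc |1 / y - t|
      = |ecfStep y (1 / y) - ecfStep y t| * (|1 / y - aE y| * |t - aE y|) := hid.symm
    _ < |ecfStep y (1 / y) - ecfStep y t| * 1 := by
        gcongr
        nlinarith [abs_nonneg (t - aE y)]
    _ = _ := mul_one _

section Periodic

variable {x t : ℝ}

lemma strictMono_abs_sub_ecfOrbit (hx : x ∈ ecfDomain) (hne : t ≠ 1 / x)
    (ht : ∀ n, 1 ≤ |ecfOrbit x t n|) :
    StrictMono fun n => |ecfOrbit x (1 / x) n - ecfOrbit x t n| := by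
  refine strictMono_nat_of_lt_succ fun n => ?_
  have hne' : ecfOrbit x t n ≠ 1 / TE^[n] x :=
    ecfOrbit_one_div x n ▸ (ecfOrbit_injective x n).ne hne
  have h := abs_sub_lt_abs_ecfStep_sub (TE_iterate_mem hx n) hne' (ht (n + 1))
  simpa only [ecfOrbit_succ, ecfOrbit_one_div] using h

lemma mem_Ioo_of_hasRoots_of_periodic (hx : x ∈ ecfDomain) {q : IntQuadratic}
    (h : q.HasRoots (1 / x) t) {r : ℕ} (hr : 1 ≤ r) (hfix : TE^[r] x = x) : t ∈ Ioo (-1) 1 := by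
  have hper : Periodic (ecfOrbit x t) r := fun n => by
    rw [add_comm, ecfOrbit_add, hfix, ecfOrbit_eq_self_of_periodic hx h hfix]
  by_cases hin : ∃ N, ecfOrbit x t N ∈ Ioo (-1) 1
  · obtain ⟨N, hN⟩ := hin
    obtain ⟨k, hk⟩ : ∃ k, N * r = N + k :=
      ⟨N * r - N, by have := Nat.le_mul_of_pos_right N hr; omega⟩
    have hNr : ecfOrbit x t (N * r) = t := hper.nat_mul_eq N
    have := ecfOrbit_mem_Ioo (TE_iterate_mem hx N) hN k
    rwa [← ecfOrbit_add, ← hk, hNr] at this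
  · have hmono := strictMono_abs_sub_ecfOrbit hx (h.ne hx.2.one_div).symm
      fun n => not_lt.mp fun h' => hin ⟨n, abs_lt.mp h'⟩
    have := hmono (show 0 < r by omega)
    simp only [ecfOrbit_one_div, hfix, ecfOrbit_eq_self_of_periodic hx h hfix] at this
    exact (lt_irrefl _ this).elim

end Periodic

lemma TE_of_one_div_lt_two {y : ℝ} (h1 : 1 < 1 / y) (h2 : 1 / y < 2) : TE y = 2 - 1 / y := by
  have hfloor : ⌊1 / y⌋ = 1 :=
    Int.floor_eq_iff.mpr ⟨by exact_mod_cast h1.le, by push_cast; linarith⟩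
  have haE : aE y = 2 := by rw [aE, hfloor, if_neg Int.not_even_one]; rfl
  rw [TE, haE, abs_of_neg (by push_cast; linarith)]
  push_cast
  ring

/-- Below `2` the map `s ↦ 1 / T_e (1 / s)` is `s ↦ 1 / (2 - s)`, which lowers `1 / (s - 1)` by `1`;
so an orbit cannot stay in `(1, 2)` forever. -/
lemma exists_two_le_one_div_TE_iterate {x : ℝ} (hx : x ∈ ecfDomain) :
    ∃ n, 2 ≤ 1 / TE^[n] x := by
  by_contra! hlt
  have hgt : ∀ n, 1 < 1 / TE^[n] x := fun n =>
    (one_lt_one_div (TE_iterate_mem hx n).1.1 (TE_iterate_mem hx n).1.2)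
  have hdec : ∀ n : ℕ, 1 / (1 / TE^[n] x - 1) = 1 / (1 / x - 1) - n := by
    intro n
    induction n with
    | zero => simp
    | succ n ih =>
      have h1 := hgt n
      have h2 := hlt n
      rw [iterate_succ_apply', TE_of_one_div_lt_two h1 h2]
      push_cast
      rw [sub_add_eq_sub_sub, ← ih]
      generalize 1 / TE^[n] x = s at h1 h2
      rw [div_sub_one (by linarith), one_div_div, div_sub_one (by linarith)]
      ring_nf
  obtain ⟨n, hn⟩ := exists_nat_gt (1 / (1 / x - 1))
  have := one_div_pos.mpr (sub_pos.mpr (hgt n))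
  linarith [hdec n]

lemma frequently_two_le_one_div_TE_iterate {x : ℝ} (hx : x ∈ ecfDomain) :
    ∃ᶠ n in atTop, 2 ≤ 1 / TE^[n] x :=
  frequently_atTop.mpr fun N =>
    let ⟨n, hn⟩ := exists_two_le_one_div_TE_iterate (TE_iterate_mem hx N)
    ⟨n + N, le_add_self, by rwa [iterate_add_apply]⟩

lemma epsE_mul_ecfStep_neg {y t : ℝ} (hy : y ∈ Ioo 0 1) (ht : t < 1) :
    epsE y * ecfStep y t < 0 := by
  have ha : (2 : ℝ) ≤ aE y := by exact_mod_cast two_le_aE hy.1 hy.2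
  rw [ecfStep, ← mul_div_assoc, epsE_mul_self]
  exact one_div_neg.mpr (by linarith)

/-- The sign of `ecfStep y b` gives `ε_e y`, and then parity pins down `a_e y`. -/
lemma ecfStep_eq_of_apply_eq {y y' b b' : ℝ} (hy : y ∈ Ioo 0 1) (hy' : y' ∈ Ioo 0 1)
    (hb : b ∈ Ioo (-1) 1) (hb' : b' ∈ Ioo (-1) 1) (h : ecfStep y b = ecfStep y' b') :
    ecfStep y = ecfStep y' := by
  have ha : (2 : ℝ) ≤ aE y := by exact_mod_cast two_le_aE hy.1 hy.2
  have ha' : (2 : ℝ) ≤ aE y' := by exact_mod_cast two_le_aE hy'.1 hy'.2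
  have heps : epsE y = epsE y' := by
    have h1 := epsE_mul_ecfStep_neg hy hb.2
    have h2 := epsE_mul_ecfStep_neg hy' hb'.2
    rw [← h] at h2
    rcases epsE_cases y with e | e <;> rcases epsE_cases y' with e' | e' <;> rw [e, e'] <;>
      rw [e] at h1 <;> rw [e'] at h2 <;> linarith
  have hsub : b - aE y = b' - aE y' := by
    rw [ecfStep, ecfStep, heps, div_eq_div_iff (by linarith [hb.2]) (by linarith [hb'.2])] at h
    linarith [mul_left_cancel₀ (epsE_ne_zero y') h]
  have haE : aE y = aE y' := by
    have hlt : |((aE y - aE y' : ℤ) : ℝ)| < 2 := by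
      push_cast
      rw [abs_lt]
      constructor <;> linarith [hb.1, hb.2, hb'.1, hb'.2]
    have hlt' : |aE y - aE y'| < 2 := by exact_mod_cast hlt
    obtain ⟨k, hk⟩ := aE_even y
    obtain ⟨k', hk'⟩ := aE_even y'
    rw [abs_lt] at hlt'
    omega
  funext t
  rw [ecfStep, ecfStep, heps, haE]

lemma apply_zero_eq_of_apply_eq {β : Type*} {g : ℕ → β}
    (hg : ∀ m n, g (m + 1) = g (n + 1) → g m = g n) (i d : ℕ) (h : g i = g (i + d)) :
    g 0 = g d := by
  induction i with
  | zero => simpa using h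
  | succ i ih => exact ih (hg _ _ (by rwa [Nat.add_right_comm] at h))

section Reduced

variable {x t : ℝ} {q : IntQuadratic}

/-- Where `1 / T_e^n x ≥ 2`, the coefficients `A`, `B` of the quadratic with roots `1 / T_e^n x`
and its conjugate are bounded in terms of the discriminant; this happens infinitely often. -/
lemma exists_lt_ecfOrbit_eq (hx : x ∈ ecfDomain) (h : q.HasRoots (1 / x) t)
    (ht : t ∈ Ioo (-1) 1) : ∃ i j, i < j ∧
      (ecfOrbit x (1 / x) i, ecfOrbit x t i) = (ecfOrbit x (1 / x) j, ecfOrbit x t j) := by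
  set S := {n | 2 ≤ 1 / TE^[n] x}
  set D := q.disc
  have hroots := hasRoots_ecfCoeffs hx h
  have hconj := ecfOrbit_mem_Ioo hx ht
  have hlt : ∀ n ∈ S, ecfOrbit x t n < ecfOrbit x (1 / x) n := fun n hn => by
    rw [ecfOrbit_one_div]
    linarith [(hconj n).2, show 2 ≤ 1 / TE^[n] x from hn]
  have hmaps : MapsTo (fun n => ((ecfCoeffs x q n).A, (ecfCoeffs x q n).B)) S
      (Icc (-D) D ×ˢ Icc (-(D * (D + 2))) (D * (D + 2))) := fun n hn => by
    have hb := (hroots n).abs_le_disc (by rwa [ecfOrbit_one_div]) (hconj n)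
    rw [disc_ecfCoeffs] at hb
    exact ⟨abs_le.mp hb.1, abs_le.mp hb.2⟩
  have hS : S.Infinite :=
    Nat.frequently_atTop_iff_infinite.mp (frequently_two_le_one_div_TE_iterate hx)
  obtain ⟨i, hi, j, hj, hij, hAB⟩ :=
    hS.exists_ne_map_eq_of_mapsTo hmaps ((finite_Icc _ _).prod (finite_Icc _ _))
  have heq : (ecfOrbit x (1 / x) i, ecfOrbit x t i) = (ecfOrbit x (1 / x) j, ecfOrbit x t j) :=
    Prod.ext_iff.mpr <| (hroots i).eq_of_A_B_disc_eq (hroots j) (congrArg Prod.fst hAB)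
      (congrArg Prod.snd hAB) (by rw [disc_ecfCoeffs, disc_ecfCoeffs]) (hlt i hi) (hlt j hj)
  rcases hij.lt_or_gt with hij | hij
  exacts [⟨i, j, hij, heq⟩, ⟨j, i, hij, heq.symm⟩]

lemma periodic_of_hasRoots_of_mem_Ioo (hx : x ∈ ecfDomain) (h : q.HasRoots (1 / x) t)
    (ht : t ∈ Ioo (-1) 1) : ∃ r, 1 ≤ r ∧ TE^[r] x = x := by
  set g : ℕ → ℝ × ℝ := fun n => (ecfOrbit x (1 / x) n, ecfOrbit x t n)
  obtain ⟨i, j, hij, hgij⟩ : ∃ i j, i < j ∧ g i = g j := exists_lt_ecfOrbit_eq hx h ht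
  have hg : ∀ m n, g (m + 1) = g (n + 1) → g m = g n := by
    intro m n hmn
    simp only [g, Prod.mk.injEq, ecfOrbit_succ] at hmn ⊢
    have hstep := ecfStep_eq_of_apply_eq (TE_iterate_mem hx m).1 (TE_iterate_mem hx n).1
      (ecfOrbit_mem_Ioo hx ht m) (ecfOrbit_mem_Ioo hx ht n) hmn.2
    rw [hstep] at hmn
    exact ⟨ecfStep_injective _ hmn.1, ecfStep_injective _ hmn.2⟩
  obtain ⟨d, rfl⟩ := Nat.exists_eq_add_of_lt hij
  have h0 : ecfOrbit x (1 / x) 0 = ecfOrbit x (1 / x) (d + 1) :=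
    congrArg Prod.fst (apply_zero_eq_of_apply_eq hg i (d + 1) (by rwa [← add_assoc]))
  rw [ecfOrbit_one_div, ecfOrbit_one_div, iterate_zero_apply, one_div, one_div, inv_inj] at h0
  exact ⟨d + 1, le_add_self, h0.symm⟩

end Reduced

/-- An irrational `α > 1` has purely periodic even continued fraction expansion
iff it is a quadratic irrational whose Galois conjugate `ᾱ = −B/A − α` lies in
`(−1, 1)`; moreover in that case `T̄_e^r(1/α, −ᾱ) = (1/α, −ᾱ)`, i.e. `−ᾱ` has
the purely periodic extended even continued fraction expansion given by the
reversed period of `α`. -/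
theorem purely_periodic_ECF_iff_quadratic_surd (α : ℝ)
    (hα : 1 < α) (hirr : Irrational α) :
    ((∃ r : ℕ, 1 ≤ r ∧ TE^[r] (1 / α) = 1 / α) ↔
      ∃ A B C : ℤ, A ≠ 0 ∧ (A : ℝ) * α ^ 2 + (B : ℝ) * α + (C : ℝ) = 0 ∧
        -1 < -(B : ℝ) / (A : ℝ) - α ∧ -(B : ℝ) / (A : ℝ) - α < 1) ∧
    (∀ r : ℕ, 1 ≤ r → TE^[r] (1 / α) = 1 / α →
      ∀ A B C : ℤ, A ≠ 0 → (A : ℝ) * α ^ 2 + (B : ℝ) * α + (C : ℝ) = 0 →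
        barTE^[r] (1 / α, -(-(B : ℝ) / (A : ℝ) - α)) =
          (1 / α, -(-(B : ℝ) / (A : ℝ) - α))) := by
  have hx : 1 / α ∈ ecfDomain :=
    ⟨⟨by positivity, (div_lt_one (by positivity)).mpr hα⟩, one_div α ▸ hirr.inv⟩
  have hroots : ∀ A B C : ℤ, A ≠ 0 → (A : ℝ) * α ^ 2 + B * α + C = 0 →
      (IntQuadratic.mk A B C).HasRoots (1 / (1 / α)) (-B / A - α) := fun A B C hA h => by
    rw [one_div_one_div]
    exact hasRoots_of_eval_eq_zero hA h
  refine ⟨⟨fun ⟨r, hr, hfix⟩ => ?_, fun ⟨A, B, C, hA, h, hlt⟩ => ?_⟩, ?_⟩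
  · obtain ⟨A, B, C, hA, h⟩ := exists_quadratic_of_periodic hx hr hfix
    rw [one_div_one_div] at h
    exact ⟨A, B, C, hA, h, mem_Ioo_of_hasRoots_of_periodic hx (hroots A B C hA h) hr hfix⟩
  · exact periodic_of_hasRoots_of_mem_Ioo hx (hroots A B C hA h) hlt
  · intro r _ hfix A B C hA h
    rw [barTE_iterate, hfix, ecfOrbit_eq_self_of_periodic hx (hroots A B C hA h) hfix]
end
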